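/- Under the E-module structure on the Fermionic Fock space F, the operator P₁ = EK₋₁ acts as wedging with x₁ and Q₁ = K₁F acts as the contraction ∂/∂x₁; more generally Pᵢ acts as wedging with xᵢ and Qᵢ as ∂/∂xᵢ, where Pᵢ = K₁P_{i−1}K₋₁ − EP_{i−1}F and Qᵢ = K₁Q_{i−1}K₋₁ − EQ_{i−1}F. -/
import Mathlib



/-- The Fermionic Fock space F = ⊕_{k≥0} ΛᵏV, V = ⊕_{i≥1} ℚxᵢ: it has basis the
sorted wedge monomials x_{i₁}∧⋯∧x_{i_k} (0 < i₁ < ⋯ < i_k), which we index by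
the finite set s = {i₁−1, …, i_k−1} ⊆ ℕ (an element n of s encodes the factor
x_{n+1}). -/
abbrev Fock : Type := Finset ℕ →₀ ℚ

/-- The basis vector of `Fock` corresponding to a wedge monomial. -/
noncomputable def fockBasis (s : Finset ℕ) : Fock := Finsupp.single s 1

/-- Linear extension of a map defined on wedge-monomial basis vectors. -/
noncomputable def fockOp (g : Finset ℕ → Fock) : Module.End ℚ Fock :=
  Finsupp.lift Fock ℚ (Finset ℕ) g

/-- K₁(x_{j₁}∧⋯∧x_{j_k}) = x_{j₁+1}∧⋯∧x_{j_k+1}. -/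
noncomputable def K1op : Module.End ℚ Fock :=
  fockOp fun s => fockBasis (s.image (· + 1))

/-- K₋₁(x_{j₁}∧⋯∧x_{j_k}) = x_{j₁−1}∧⋯∧x_{j_k−1}, with x₀ := 0. -/
noncomputable def Km1op : Module.End ℚ Fock :=
  fockOp fun s => if 0 ∈ s then 0 else fockBasis (s.image (· - 1))

/-- E(x_{j₁}∧⋯∧x_{j_k}) = x₁∧x_{j₁+1}∧⋯∧x_{j_k+1}. -/
noncomputable def Eop : Module.End ℚ Fock :=
  fockOp fun s => fockBasis (insert 0 (s.image (· + 1)))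

/-- F(x_{j₁}∧⋯∧x_{j_k}) = ∂/∂x₁(x_{j₁−1}∧⋯∧x_{j_k−1}): the contraction with x₁
combined with the downward shift of indices (the component of ∂/∂x₁ picking out
the factor x₁, i.e. j₁ = 1, after which all remaining indices drop by one). -/
noncomputable def Fop : Module.End ℚ Fock :=
  fockOp fun s => if 0 ∈ s then fockBasis ((s.erase 0).image (· - 1)) else 0


/-- Wedging with xᵢ (i ≥ 1): on a sorted wedge monomial this inserts the factor
xᵢ with the Koszul sign (−1)^{#{factors with smaller index}}, and is 0 if xᵢ
already occurs. (Recall element n of s encodes x_{n+1}.) -/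
noncomputable def wedgeOp (i : ℕ) : Module.End ℚ Fock :=
  fockOp fun s => if i - 1 ∈ s then 0
    else ((-1 : ℚ) ^ ((s.filter (· < i - 1)).card)) • fockBasis (insert (i - 1) s)

/-- The contraction ∂/∂xᵢ (i ≥ 1): removes the factor xᵢ with the Koszul sign,
and is 0 if xᵢ does not occur. -/
noncomputable def contrOp (i : ℕ) : Module.End ℚ Fock :=
  fockOp fun s => if i - 1 ∈ s
    then ((-1 : ℚ) ^ ((s.filter (· < i - 1)).card)) • fockBasis (s.erase (i - 1))
    else 0

/-- Pᵢ : P₁ = EK₋₁, Pᵢ = K₁P_{i−1}K₋₁ − EP_{i−1}F for i > 1 (P₀ := 0). -/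
noncomputable def Pop : ℕ → Module.End ℚ Fock
  | 0 => 0
  | 1 => Eop * Km1op
  | (n + 2) => K1op * Pop (n + 1) * Km1op - Eop * Pop (n + 1) * Fop

/-- Qᵢ : Q₁ = K₁F, Qᵢ = K₁Q_{i−1}K₋₁ − EQ_{i−1}F for i > 1 (Q₀ := 0). -/
noncomputable def Qop : ℕ → Module.End ℚ Fock
  | 0 => 0
  | 1 => K1op * Fop
  | (n + 2) => K1op * Qop (n + 1) * Km1op - Eop * Qop (n + 1) * Fop

section Aux

lemma fockOp_basis (g : Finset ℕ → Fock) (s : Finset ℕ) : fockOp g (fockBasis s) = g s := by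
  simp [fockOp, fockBasis, Finsupp.lift_apply, Finsupp.sum_single_index]

lemma fock_ext {f g : Module.End ℚ Fock} (h : ∀ s, f (fockBasis s) = g (fockBasis s)) : f = g := by
  apply Finsupp.lhom_ext
  intro a b
  have e : (Finsupp.single a b : Fock) = b • fockBasis a := by
    simp [fockBasis, Finsupp.smul_single]
  rw [e, map_smul, map_smul, h]

lemma K1op_basis (s : Finset ℕ) : K1op (fockBasis s) = fockBasis (s.image (· + 1)) :=
  fockOp_basis _ s
lemma Km1op_basis (s : Finset ℕ) :
    Km1op (fockBasis s) = if 0 ∈ s then 0 else fockBasis (s.image (· - 1)) :=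
  fockOp_basis _ s
lemma Eop_basis (s : Finset ℕ) : Eop (fockBasis s) = fockBasis (insert 0 (s.image (· + 1))) :=
  fockOp_basis _ s
lemma Fop_basis (s : Finset ℕ) :
    Fop (fockBasis s) = if 0 ∈ s then fockBasis ((s.erase 0).image (· - 1)) else 0 :=
  fockOp_basis _ s
lemma wedgeOp_basis (i : ℕ) (s : Finset ℕ) : wedgeOp i (fockBasis s) = if i - 1 ∈ s then 0
    else ((-1 : ℚ) ^ ((s.filter (· < i - 1)).card)) • fockBasis (insert (i - 1) s) :=
  fockOp_basis _ s
lemma contrOp_basis (i : ℕ) (s : Finset ℕ) : contrOp i (fockBasis s) = if i - 1 ∈ s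
    then ((-1 : ℚ) ^ ((s.filter (· < i - 1)).card)) • fockBasis (s.erase (i - 1))
    else 0 :=
  fockOp_basis _ s

lemma img_sub_mem {s : Finset ℕ} (h0 : 0 ∉ s) {n : ℕ} :
    n ∈ s.image (· - 1) ↔ n + 1 ∈ s := by
  simp only [Finset.mem_image]
  constructor
  · rintro ⟨x, hx, rfl⟩
    have hx0 : x ≠ 0 := by rintro rfl; exact h0 hx
    have e : x - 1 + 1 = x := by omega
    rwa [e]
  · exact fun h => ⟨n + 1, h, rfl⟩

lemma img_sub_add {s : Finset ℕ} (h0 : 0 ∉ s) :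
    (s.image (· - 1)).image (· + 1) = s := by
  rw [Finset.image_image]
  ext a
  simp only [Finset.mem_image, Function.comp]
  constructor
  · rintro ⟨x, hx, rfl⟩
    have hx0 : x ≠ 0 := by rintro rfl; exact h0 hx
    have e : x - 1 + 1 = x := by omega
    rwa [e]
  · intro ha
    refine ⟨a, ha, ?_⟩
    have hx0 : a ≠ 0 := by rintro rfl; exact h0 ha
    omega

lemma img_sub_filter {s : Finset ℕ} (h0 : 0 ∉ s) (n : ℕ) :
    ((s.image (· - 1)).filter (· < n)).card = (s.filter (· < n + 1)).card := by
  have key : (s.image (· - 1)).filter (· < n) = (s.filter (· < n + 1)).image (· - 1) := by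
    ext a
    simp only [Finset.mem_filter, Finset.mem_image]
    constructor
    · rintro ⟨⟨x, hx, rfl⟩, hlt⟩
      have hx0 : x ≠ 0 := by rintro rfl; exact h0 hx
      exact ⟨x, ⟨hx, by omega⟩, rfl⟩
    · rintro ⟨x, ⟨hx, hlt⟩, rfl⟩
      have hx0 : x ≠ 0 := by rintro rfl; exact h0 hx
      exact ⟨⟨x, hx, rfl⟩, by omega⟩
  rw [key, Finset.card_image_of_injOn]
  intro x hx y hy e
  simp only [Finset.coe_filter, Set.mem_setOf_eq] at hx hy
  have hx0 : x ≠ 0 := by rintro rfl; exact h0 hx.1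
  have hy0 : y ≠ 0 := by rintro rfl; exact h0 hy.1
  have e' : x - 1 = y - 1 := by simpa using e
  omega

lemma img_sub_erase {s : Finset ℕ} (h0 : 0 ∉ s) (n : ℕ) :
    (s.image (· - 1)).erase n = (s.erase (n + 1)).image (· - 1) := by
  ext a
  simp only [Finset.mem_erase, Finset.mem_image]
  constructor
  · rintro ⟨hne, x, hx, rfl⟩
    have hx0 : x ≠ 0 := by rintro rfl; exact h0 hx
    exact ⟨x, ⟨by omega, hx⟩, rfl⟩
  · rintro ⟨x, ⟨hne, hx⟩, rfl⟩
    have hx0 : x ≠ 0 := by rintro rfl; exact h0 hx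
    exact ⟨by omega, x, hx, rfl⟩

lemma P_base : Eop * Km1op = wedgeOp 1 := by
  apply fock_ext
  intro s
  rw [Module.End.mul_apply, Km1op_basis, wedgeOp_basis]
  by_cases h0 : 0 ∈ s
  · rw [if_pos h0, map_zero, if_pos (by simpa using h0)]
  · rw [if_neg h0, Eop_basis, img_sub_add h0, if_neg (by simpa using h0)]
    simp
lemma Q_base : K1op * Fop = contrOp 1 := by
  apply fock_ext
  intro s
  rw [Module.End.mul_apply, Fop_basis, contrOp_basis]
  by_cases h0 : 0 ∈ s
  · rw [if_pos h0, K1op_basis, img_sub_add (by simp), if_pos (by simpa using h0)]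
    simp
  · rw [if_neg h0, map_zero, if_neg (by simpa using h0)]

lemma P_step (n : ℕ) :
    K1op * wedgeOp (n + 1) * Km1op - Eop * wedgeOp (n + 1) * Fop = wedgeOp (n + 2) := by
  apply fock_ext
  intro s
  rw [LinearMap.sub_apply, Module.End.mul_apply, Module.End.mul_apply, Module.End.mul_apply,
    Module.End.mul_apply, Km1op_basis, Fop_basis, wedgeOp_basis]
  have e1 : n + 1 - 1 = n := rfl
  have e2 : n + 2 - 1 = n + 1 := rfl
  rw [e2]
  by_cases h0 : 0 ∈ s
  · rw [if_pos h0, if_pos h0, map_zero, map_zero, wedgeOp_basis, e1]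
    have h0' : 0 ∉ s.erase 0 := by simp
    by_cases hn : n + 1 ∈ s
    · rw [if_pos ((img_sub_mem h0').mpr (by simp [hn])), if_pos hn]
      simp
    · rw [if_neg (by rw [img_sub_mem h0']; simp [hn]), if_neg hn, map_smul, Eop_basis,
        Finset.image_insert, img_sub_add h0', img_sub_filter h0',
        Finset.filter_erase, Finset.insert_comm, Finset.insert_erase h0]
      have hc : 0 ∈ s.filter (· < n + 1) := Finset.mem_filter.mpr ⟨h0, by simp⟩
      rw [Finset.card_erase_of_mem hc]
      have hcpos : 1 ≤ (s.filter (· < n + 1)).card := Finset.card_pos.mpr ⟨0, hc⟩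
      rw [show (s.filter (· < n + 1)).card = ((s.filter (· < n + 1)).card - 1) + 1 by omega,
        pow_succ]
      simp [neg_smul, mul_comm]
  · rw [if_neg h0, if_neg h0, map_zero, map_zero, wedgeOp_basis, e1]
    by_cases hn : n + 1 ∈ s
    · rw [if_pos ((img_sub_mem h0).mpr hn), if_pos hn]
      simp
    · rw [if_neg (by rw [img_sub_mem h0]; exact hn), if_neg hn, map_smul, K1op_basis,
        Finset.image_insert, img_sub_add h0, img_sub_filter h0]
      simp

lemma Q_step (n : ℕ) :
    K1op * contrOp (n + 1) * Km1op - Eop * contrOp (n + 1) * Fop = contrOp (n + 2) := by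
  apply fock_ext
  intro s
  rw [LinearMap.sub_apply, Module.End.mul_apply, Module.End.mul_apply, Module.End.mul_apply,
    Module.End.mul_apply, Km1op_basis, Fop_basis, contrOp_basis]
  have e1 : n + 1 - 1 = n := rfl
  have e2 : n + 2 - 1 = n + 1 := rfl
  rw [e2]
  by_cases h0 : 0 ∈ s
  · rw [if_pos h0, if_pos h0, map_zero, map_zero, contrOp_basis, e1]
    have h0' : 0 ∉ s.erase 0 := by simp
    by_cases hn : n + 1 ∈ s
    · rw [if_pos ((img_sub_mem h0').mpr (by simp [hn])), if_pos hn, map_smul, Eop_basis,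
        img_sub_erase h0', img_sub_add (by simp), img_sub_filter h0',
        Finset.filter_erase,
        show (s.erase 0).erase (n + 1) = (s.erase (n + 1)).erase 0 by
          ext a; simp only [Finset.mem_erase]; tauto,
        Finset.insert_erase (Finset.mem_erase.mpr ⟨by simp, h0⟩)]
      have hc : 0 ∈ s.filter (· < n + 1) := Finset.mem_filter.mpr ⟨h0, by simp⟩
      rw [Finset.card_erase_of_mem hc]
      have hcpos : 1 ≤ (s.filter (· < n + 1)).card := Finset.card_pos.mpr ⟨0, hc⟩
      rw [show (s.filter (· < n + 1)).card = ((s.filter (· < n + 1)).card - 1) + 1 by omega,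
        pow_succ]
      simp [neg_smul, mul_comm]
    · rw [if_neg (by rw [img_sub_mem h0']; simp [hn]), if_neg hn]
      simp
  · rw [if_neg h0, if_neg h0, map_zero, map_zero, contrOp_basis, e1]
    by_cases hn : n + 1 ∈ s
    · rw [if_pos ((img_sub_mem h0).mpr hn), if_pos hn, map_smul, K1op_basis,
        img_sub_erase h0, img_sub_add (fun h => h0 (Finset.mem_of_mem_erase h)),
        img_sub_filter h0]
      simp
    · rw [if_neg (by rw [img_sub_mem h0]; exact hn), if_neg hn]
      simp

end Aux

/- Under the 𝓔-module structure on the Fermionic Fock space, P₁ = EK₋₁ acts as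
wedging with x₁ and Q₁ = K₁F as the contraction ∂/∂x₁; more generally Pᵢ acts
as wedging with xᵢ and Qᵢ as ∂/∂xᵢ. -/
theorem stmt10 : ∀ i : ℕ, 1 ≤ i → Pop i = wedgeOp i ∧ Qop i = contrOp i := by
  intro i hi
  obtain ⟨n, rfl⟩ : ∃ n, i = n + 1 := ⟨i - 1, by omega⟩
  clear hi
  induction n with
  | zero => exact ⟨P_base, Q_base⟩
  | succ m ih =>
    refine ⟨?_, ?_⟩
    · show K1op * Pop (m + 1) * Km1op - Eop * Pop (m + 1) * Fop = _
      rw [ih.1]; exact P_step m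
    · show K1op * Qop (m + 1) * Km1op - Eop * Qop (m + 1) * Fop = _
      rw [ih.2]; exact Q_step m
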